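/- arXiv:1212.3649 — 4 statements merged into one kernel-verified Lean document; each statement's English description precedes it below -/
import Mathlib

section
/- Let ρ be a non-degenerate Borel probability measure on ℝ satisfying ∫ exp(a x²/2 + b x) dρ(x) < ∞ for all a,b ∈ ℝ with a > 0. For J > 0 and h ∈ ℝ define f(x) = -(J/2)x² + log ∫ exp(s(Jx+h)) dρ(s). Then f is real analytic on ℝ and f(x) → -∞ as |x| → ∞. -/
/-!
`log ∫ exp (s t) dρ(s)` is the cumulant generating function of `ρ`, which is analytic wherever
the moment generating function is finite, hence everywhere. Completing the square,
`s t ≤ t² / (2a) + a s² / 2`, so the moment generating function is at most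
`exp (t² / (2a)) ∫ exp (a s² / 2) dρ`; with `a = 4J` the cumulant term in `f` grows at most like
`J x² / 4`, which the `-(J/2) x²` term beats.
-/

open MeasureTheory Real Filter

namespace ProbabilityTheory

variable {Ω : Type*} {m : MeasurableSpace Ω} {X : Ω → ℝ} {μ : Measure Ω} {a : ℝ}

lemma exp_mul_le_exp_sq_div_mul_exp_sq (ha : 0 < a) (t x : ℝ) :
    exp (t * x) ≤ exp (t ^ 2 / (2 * a)) * exp (a * x ^ 2 / 2) := by
  rw [← exp_add]
  refine exp_le_exp.2 ?_
  have key : 0 ≤ (a * x - t) ^ 2 / (2 * a) := by positivity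
  have expand : (a * x - t) ^ 2 / (2 * a) = t ^ 2 / (2 * a) + a * x ^ 2 / 2 - t * x := by
    field_simp
    ring
  linarith

lemma integrable_exp_mul_of_integrable_exp_sq (hX : AEMeasurable X μ) (ha : 0 < a)
    (hint : Integrable (fun ω ↦ exp (a * X ω ^ 2 / 2)) μ) (t : ℝ) :
    Integrable (fun ω ↦ exp (t * X ω)) μ := by
  refine (hint.const_mul (exp (t ^ 2 / (2 * a)))).mono'
    (hX.const_mul t).exp.aestronglyMeasurable (ae_of_all _ fun ω ↦ ?_)
  rw [norm_of_nonneg (exp_nonneg _)]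
  exact exp_mul_le_exp_sq_div_mul_exp_sq ha t (X ω)

lemma integrableExpSet_eq_univ_of_integrable_exp_sq (hX : AEMeasurable X μ) (ha : 0 < a)
    (hint : Integrable (fun ω ↦ exp (a * X ω ^ 2 / 2)) μ) :
    integrableExpSet X μ = Set.univ :=
  Set.eq_univ_of_forall (integrable_exp_mul_of_integrable_exp_sq hX ha hint)

lemma mgf_le_exp_sq_div_mul_integral_exp_sq (ha : 0 < a)
    (hint : Integrable (fun ω ↦ exp (a * X ω ^ 2 / 2)) μ) (t : ℝ) :
    mgf X μ t ≤ exp (t ^ 2 / (2 * a)) * μ[fun ω ↦ exp (a * X ω ^ 2 / 2)] := by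
  rw [← integral_const_mul]
  exact integral_mono_of_nonneg (ae_of_all _ fun ω ↦ exp_nonneg _)
    (hint.const_mul _) (ae_of_all _ fun ω ↦ exp_mul_le_exp_sq_div_mul_exp_sq ha t (X ω))

lemma cgf_le_sq_div_add_log_integral_exp_sq [NeZero μ] (hX : AEMeasurable X μ) (ha : 0 < a)
    (hint : Integrable (fun ω ↦ exp (a * X ω ^ 2 / 2)) μ) (t : ℝ) :
    cgf X μ t ≤ t ^ 2 / (2 * a) + log μ[fun ω ↦ exp (a * X ω ^ 2 / 2)] := by
  have hmgf_pos : 0 < mgf X μ t :=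
    mgf_pos_iff.2 (integrable_exp_mul_of_integrable_exp_sq hX ha hint t)
  have hint_pos : 0 < μ[fun ω ↦ exp (a * X ω ^ 2 / 2)] := integral_exp_pos hint
  calc cgf X μ t
      ≤ log (exp (t ^ 2 / (2 * a)) * μ[fun ω ↦ exp (a * X ω ^ 2 / 2)]) :=
        log_le_log hmgf_pos (mgf_le_exp_sq_div_mul_integral_exp_sq ha hint t)
    _ = t ^ 2 / (2 * a) + log μ[fun ω ↦ exp (a * X ω ^ 2 / 2)] := by
        rw [log_mul (exp_pos _).ne' hint_pos.ne', log_exp]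

end ProbabilityTheory

open ProbabilityTheory

lemma tendsto_neg_mul_sq_add_cocompact_atBot {c : ℝ} (hc : 0 < c) (d : ℝ) :
    Tendsto (fun x : ℝ ↦ -c * x ^ 2 + d) (cocompact ℝ) atBot := by
  have hsq : Tendsto (fun x : ℝ ↦ x ^ 2) (cocompact ℝ) atTop :=
    ((tendsto_pow_atTop two_ne_zero).comp tendsto_norm_cocompact_atTop).congr
      fun x ↦ by simp [sq_abs]
  exact tendsto_atBot_add_const_right _ d
    ((tendsto_const_mul_atBot_of_neg (neg_lt_zero.2 hc)).2 hsq)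

lemma neg_mul_sq_add_affine_sq_div_le {J : ℝ} (hJ : 0 < J) (h x : ℝ) :
    -(J / 2) * x ^ 2 + (J * x + h) ^ 2 / (2 * (4 * J)) ≤ -(J / 4) * x ^ 2 + h ^ 2 / (4 * J) := by
  have hsq : (J * x + h) ^ 2 ≤ 2 * J ^ 2 * x ^ 2 + 2 * h ^ 2 := by
    nlinarith [sq_nonneg (J * x - h)]
  have hdiv : (J * x + h) ^ 2 / (2 * (4 * J)) ≤ J / 4 * x ^ 2 + h ^ 2 / (4 * J) := by
    calc (J * x + h) ^ 2 / (2 * (4 * J))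
        ≤ (2 * J ^ 2 * x ^ 2 + 2 * h ^ 2) / (2 * (4 * J)) := by gcongr
      _ = J / 4 * x ^ 2 + h ^ 2 / (4 * J) := by field_simp
  linarith

theorem stmt_0_general (ρ : Measure ℝ) [IsProbabilityMeasure ρ]
    (hmom : ∀ a b : ℝ, 0 < a → Integrable (fun x => Real.exp (a * x ^ 2 / 2 + b * x)) ρ)
    (J h : ℝ) (hJ : 0 < J)
    (f : ℝ → ℝ)
    (hf : ∀ x, f x = -(J / 2) * x ^ 2 + Real.log (∫ s, Real.exp (s * (J * x + h)) ∂ρ)) :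
    (∀ x : ℝ, AnalyticAt ℝ f x) ∧ Tendsto f (cocompact ℝ) atBot := by
  have hf_cgf : f = fun x ↦ -(J / 2) * x ^ 2 + cgf id ρ (J * x + h) := by
    ext x
    simp only [hf, cgf, mgf, id, mul_comm]
  have hJ4 : 0 < 4 * J := by positivity
  have hint : Integrable (fun s : ℝ ↦ exp (4 * J * s ^ 2 / 2)) ρ := by simpa using hmom _ 0 hJ4
  have hset := integrableExpSet_eq_univ_of_integrable_exp_sq aemeasurable_id hJ4 hint
  refine ⟨fun x ↦ ?_, ?_⟩
  · rw [hf_cgf]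
    have hcgf : AnalyticAt ℝ (cgf id ρ) (J * x + h) := analyticAt_cgf (by simp [hset])
    exact (analyticAt_const.mul (analyticAt_id.pow 2)).add
      (hcgf.comp (f := fun x ↦ J * x + h) (by fun_prop))
  · refine tendsto_atBot_mono (fun x ↦ ?_) (tendsto_neg_mul_sq_add_cocompact_atBot
      (by positivity : 0 < J / 4) (h ^ 2 / (4 * J) + log (∫ s, exp (4 * J * s ^ 2 / 2) ∂ρ)))
    have hbound := cgf_le_sq_div_add_log_integral_exp_sq aemeasurable_id hJ4 hint
      (J * x + h)
    rw [hf_cgf]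
    dsimp only [id] at hbound ⊢
    linarith [neg_mul_sq_add_affine_sq_div_le hJ h x, hbound]

theorem stmt_0 (ρ : Measure ℝ) [IsProbabilityMeasure ρ]
    (hnd : ¬ ∃ c : ℝ, ρ = Measure.dirac c)
    (hmom : ∀ a b : ℝ, 0 < a → Integrable (fun x => Real.exp (a * x ^ 2 / 2 + b * x)) ρ)
    (J h : ℝ) (hJ : 0 < J)
    (f : ℝ → ℝ)
    (hf : ∀ x, f x = -(J / 2) * x ^ 2 + Real.log (∫ s, Real.exp (s * (J * x + h)) ∂ρ)) :
    (∀ x : ℝ, AnalyticAt ℝ f x) ∧ Tendsto f (cocompact ℝ) atBot :=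
  stmt_0_general ρ hmom J h hJ f hf
end

section
/- Let ρ be a non-degenerate Borel probability measure on ℝ satisfying ∫ exp(a x²/2 + b x) dρ(x) < ∞ for all a > 0, b ∈ ℝ, and let f(x) = -(J/2)x² + log ∫ exp(s(Jx+h)) dρ(s) with J > 0. Then f attains its supremum and has only finitely many global maximum points. -/
/-!
Since `ρ` has all exponential moments, `f x = -(J/2) x² + cgf ρ (J x + h)` is real analytic.
Young's inequality `s t ≤ 2 J s² + t² / (8 J)` gives `cgf ρ t ≤ t² / (8 J) + C`, hence
`f x ≤ -(J/4) x² + D`, so `f → -∞` at infinity and attains its maximum. The maximizers form a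
level set of a nonconstant analytic function contained in a compact set; by the isolated zeros
principle it is finite.
-/

open MeasureTheory Real Filter ProbabilityTheory

theorem AnalyticOnNhd.finite_setOf_eq_of_eventually_cocompact_ne
    {𝕜 E : Type*} [NontriviallyNormedField 𝕜] [PreconnectedSpace 𝕜]
    [NormedAddCommGroup E] [NormedSpace 𝕜 E] {f : 𝕜 → E}
    (hf : AnalyticOnNhd 𝕜 f Set.univ) {c : E} (hc : ∀ᶠ x in cocompact 𝕜, f x ≠ c) :
    {x | f x = c}.Finite := by
  obtain ⟨K, hK, hKc⟩ := mem_cocompact.1 hc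
  rcases hf.eqOn_or_eventually_ne_of_preconnected analyticOnNhd_const isPreconnected_univ with
    hconst | hne
  · obtain ⟨x, hx⟩ := hc.exists
    exact absurd (hconst (Set.mem_univ x)) hx
  · refine (hK.finite_sdiff_of_mem_codiscreteWithin
      (codiscreteWithin_mono (Set.subset_univ K) hne)).subset fun x hx => ⟨?_, not_not.2 hx⟩
    by_contra hxK
    exact hKc hxK hx

theorem AnalyticOnNhd.exists_forall_ge_and_finite_of_tendsto_cocompact_atBot {f : ℝ → ℝ}
    (hf : AnalyticOnNhd ℝ f Set.univ) (hlim : Tendsto f (cocompact ℝ) atBot) :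
    (∃ μ, ∀ x, f x ≤ f μ) ∧ {μ | ∀ x, f x ≤ f μ}.Finite := by
  obtain ⟨μ₀, hμ₀⟩ := hf.continuous.exists_forall_ge hlim
  refine ⟨⟨μ₀, hμ₀⟩, (hf.finite_setOf_eq_of_eventually_cocompact_ne
    ((hlim.eventually_lt_atBot (f μ₀)).mono fun _ => ne_of_lt)).subset fun μ hμ => ?_⟩
  exact le_antisymm (hμ₀ μ) (hμ μ₀)

theorem tendsto_cocompact_atBot_of_le_neg_mul_sq_add {f : ℝ → ℝ} {c D : ℝ} (hc : 0 < c)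
    (hf : ∀ x, f x ≤ -c * x ^ 2 + D) : Tendsto f (cocompact ℝ) atBot := by
  have hsq : Tendsto (fun x : ℝ => x ^ 2) (cocompact ℝ) atTop := by
    simpa only [Function.comp_def, norm_eq_abs, sq_abs] using
      (tendsto_pow_atTop two_ne_zero).comp (tendsto_norm_cocompact_atTop (E := ℝ))
  exact tendsto_atBot_mono hf
    (tendsto_atBot_add_const_right _ D (hsq.const_mul_atTop_of_neg (neg_neg_of_pos hc)))

theorem integrable_exp_mul_of_integrable_exp_sq_add {μ : Measure ℝ} {a t : ℝ} (ha : 0 ≤ a)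
    (h : Integrable (fun x => exp (a * x ^ 2 / 2 + t * x)) μ) :
    Integrable (fun x => exp (t * x)) μ :=
  h.mono' (by fun_prop) <| .of_forall fun x => by
    rw [norm_of_nonneg (exp_pos _).le]
    exact exp_le_exp.2 (by nlinarith [sq_nonneg x])

theorem mgf_id_le {μ : Measure ℝ} {a : ℝ} (ha : 0 < a) (t : ℝ)
    (hint : Integrable (fun x => exp (a * x ^ 2 / 2)) μ) :
    mgf id μ t ≤ exp (t ^ 2 / (2 * a)) * ∫ x, exp (a * x ^ 2 / 2) ∂μ := by
  rw [← integral_const_mul]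
  refine integral_mono_of_nonneg (.of_forall fun _ => (exp_pos _).le) (hint.const_mul _)
    (.of_forall fun x => ?_)
  simp only [id_eq, ← exp_add]
  refine exp_le_exp.2 ?_
  have young : t * x ≤ a * x ^ 2 / 2 + t ^ 2 / (2 * a) := by
    rw [div_add_div _ _ two_ne_zero (by positivity), le_div_iff₀ (by positivity)]
    nlinarith [sq_nonneg (a * x - t)]
  linarith

theorem cgf_id_le {μ : Measure ℝ} [NeZero μ] {a : ℝ} (ha : 0 < a) (t : ℝ)
    (hint : Integrable (fun x => exp (a * x ^ 2 / 2)) μ)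
    (hint_t : Integrable (fun x => exp (t * x)) μ) :
    cgf id μ t ≤ t ^ 2 / (2 * a) + log (∫ x, exp (a * x ^ 2 / 2) ∂μ) := by
  calc cgf id μ t ≤ log (exp (t ^ 2 / (2 * a)) * ∫ x, exp (a * x ^ 2 / 2) ∂μ) :=
        log_le_log (mgf_pos' (NeZero.ne μ) hint_t) (mgf_id_le ha t hint)
    _ = _ := by rw [log_mul (exp_ne_zero _) (integral_exp_pos hint).ne', log_exp]

theorem neg_mul_sq_add_cgf_id_affine_le {μ : Measure ℝ} [NeZero μ] {J : ℝ} (hJ : 0 < J)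
    (h x : ℝ) (hint : Integrable (fun s => exp (4 * J * s ^ 2 / 2)) μ)
    (hint_t : Integrable (fun s => exp ((J * x + h) * s)) μ) :
    -(J / 2) * x ^ 2 + cgf id μ (J * x + h) ≤
      -(J / 4) * x ^ 2 + (h ^ 2 / (4 * J) + log (∫ s, exp (4 * J * s ^ 2 / 2) ∂μ)) := by
  have hgap : -(J / 4) * x ^ 2 + h ^ 2 / (4 * J) -
      (-(J / 2) * x ^ 2 + (J * x + h) ^ 2 / (2 * (4 * J))) = (J * x - h) ^ 2 / (8 * J) := by
    field_simp
    ring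
  linarith [cgf_id_le (by positivity) (J * x + h) hint hint_t,
    div_nonneg (sq_nonneg (J * x - h)) (by positivity : (0 : ℝ) ≤ 8 * J)]

theorem stmt_1_general (ρ : Measure ℝ) [IsProbabilityMeasure ρ]
    (hmom : ∀ a b : ℝ, 0 < a → Integrable (fun x => Real.exp (a * x ^ 2 / 2 + b * x)) ρ)
    (J h : ℝ) (hJ : 0 < J)
    (f : ℝ → ℝ)
    (hf : ∀ x, f x = -(J / 2) * x ^ 2 + Real.log (∫ s, Real.exp (s * (J * x + h)) ∂ρ)) :
    (∃ μ : ℝ, ∀ x : ℝ, f x ≤ f μ) ∧ {μ : ℝ | ∀ x : ℝ, f x ≤ f μ}.Finite := by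
  have hexp (t : ℝ) : Integrable (fun x => exp (t * x)) ρ :=
    integrable_exp_mul_of_integrable_exp_sq_add zero_le_one (hmom 1 t one_pos)
  have hsq : Integrable (fun x => exp (4 * J * x ^ 2 / 2)) ρ := by
    simpa using hmom (4 * J) 0 (by positivity)
  have hf_cgf : f = fun x => -(J / 2) * x ^ 2 + cgf id ρ (J * x + h) := by
    funext x
    simp only [hf, cgf, mgf, id_eq, mul_comm]
  have hcgf (t : ℝ) : AnalyticAt ℝ (cgf id ρ) t :=
    analyticAt_cgf (by simp [integrableExpSet, hexp])
  rw [hf_cgf]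
  exact AnalyticOnNhd.exists_forall_ge_and_finite_of_tendsto_cocompact_atBot
    (fun x _ => (analyticAt_const.mul (analyticAt_id.pow 2)).add ((hcgf _).comp (by fun_prop)))
    (tendsto_cocompact_atBot_of_le_neg_mul_sq_add (by positivity) fun x =>
      neg_mul_sq_add_cgf_id_affine_le hJ h x hsq (hexp _))

theorem stmt_1 (ρ : Measure ℝ) [IsProbabilityMeasure ρ]
    (hnd : ¬ ∃ c : ℝ, ρ = Measure.dirac c)
    (hmom : ∀ a b : ℝ, 0 < a → Integrable (fun x => Real.exp (a * x ^ 2 / 2 + b * x)) ρ)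
    (J h : ℝ) (hJ : 0 < J)
    (f : ℝ → ℝ)
    (hf : ∀ x, f x = -(J / 2) * x ^ 2 + Real.log (∫ s, Real.exp (s * (J * x + h)) ∂ρ)) :
    (∃ μ : ℝ, ∀ x : ℝ, f x ≤ f μ) ∧ {μ : ℝ | ∀ x : ℝ, f x ≤ f μ}.Finite :=
  stmt_1_general ρ hmom J h hJ f hf
end

section
/- Let f : ℝ → ℝ be continuous with ∫ exp(f(x)) dx < ∞ and sup f = F = f(μ) attained at some point μ. Then for every natural number N ≥ 1, ∫ exp(N f(x)) dx < ∞, and (1/N) log ∫ exp(N f(x)) dx → f(μ) as N → ∞. -/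
open MeasureTheory Real Filter

/-!
Laplace's principle. Writing `F = f μ`, the bound `exp (t f) ≤ exp ((t - 1) F) exp f` gives
integrability and `log ∫ exp (t f) ≤ (t - 1) F + log ∫ exp f`. Conversely, for `c < F`
continuity gives an open neighbourhood `s` of `μ` of positive finite measure on which `c < f`,
so `log ∫ exp (t f) ≥ t c + log |s|`. Dividing by `t` and letting `t → ∞` squeezes the limit
to `F`.
-/

lemma exp_mul_le_exp_sub_one_mul_mul_exp {y F t : ℝ} (hy : y ≤ F) (ht : 1 ≤ t) :
    exp (t * y) ≤ exp ((t - 1) * F) * exp y := by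
  rw [← exp_add, exp_le_exp]
  nlinarith

lemma tendsto_const_add_const_div_atTop (a b : ℝ) :
    Tendsto (fun t : ℝ => a + b / t) atTop (nhds a) := by
  simpa using (tendsto_const_nhds (x := a)).add
    ((tendsto_const_nhds (x := b)).div_atTop tendsto_id)

section LaplacePrinciple

variable {α : Type*} [MeasurableSpace α] {ν : Measure α} {f : α → ℝ}

lemma integrable_exp_mul_of_le {F t : ℝ} (hf : ∀ x, f x ≤ F)
    (hint : Integrable (fun x => exp (f x)) ν) (ht : 1 ≤ t) :
    Integrable (fun x => exp (t * f x)) ν := by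
  have hmeas : AEStronglyMeasurable (fun x => exp (t * f x)) ν := by
    simp_rw [mul_comm t, Real.exp_mul]
    exact (hint.aestronglyMeasurable.aemeasurable.pow_const t).aestronglyMeasurable
  refine (hint.const_mul (exp ((t - 1) * F))).mono' hmeas (ae_of_all _ fun x => ?_)
  rw [norm_of_nonneg (exp_pos _).le]
  exact exp_mul_le_exp_sub_one_mul_mul_exp (hf x) ht

lemma log_integral_exp_mul_div_le [NeZero ν] {F t : ℝ} (hf : ∀ x, f x ≤ F)
    (hint : Integrable (fun x => exp (f x)) ν) (ht : 1 ≤ t) :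
    log (∫ x, exp (t * f x) ∂ν) / t ≤ F + (log (∫ x, exp (f x) ∂ν) - F) / t := by
  have hint_t := integrable_exp_mul_of_le hf hint ht
  have hle : ∫ x, exp (t * f x) ∂ν ≤ exp ((t - 1) * F) * ∫ x, exp (f x) ∂ν := by
    rw [← integral_const_mul]
    exact integral_mono hint_t (hint.const_mul _)
      fun x => exp_mul_le_exp_sub_one_mul_mul_exp (hf x) ht
  have hlog : log (∫ x, exp (t * f x) ∂ν) ≤ (t - 1) * F + log (∫ x, exp (f x) ∂ν) := by
    calc log (∫ x, exp (t * f x) ∂ν)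
        ≤ log (exp ((t - 1) * F) * ∫ x, exp (f x) ∂ν) :=
          log_le_log (integral_exp_pos hint_t) hle
      _ = (t - 1) * F + log (∫ x, exp (f x) ∂ν) := by
          rw [log_mul (exp_pos _).ne' (integral_exp_pos hint).ne', log_exp]
  have ht0 : 0 < t := by linarith
  rw [div_le_iff₀ ht0]
  calc log (∫ x, exp (t * f x) ∂ν) ≤ (t - 1) * F + log (∫ x, exp (f x) ∂ν) := hlog
    _ = (F + (log (∫ x, exp (f x) ∂ν) - F) / t) * t := by field_simp; ring

lemma add_log_measureReal_div_le_log_integral_exp_mul_div {s : Set α} {c t : ℝ}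
    (hs : MeasurableSet s) (hs_pos : 0 < ν s) (hs_fin : ν s ≠ ⊤) (hcf : ∀ x ∈ s, c ≤ f x)
    (hint_t : Integrable (fun x => exp (t * f x)) ν) (ht : 0 < t) :
    c + log (ν.real s) / t ≤ log (∫ x, exp (t * f x) ∂ν) / t := by
  have hs_real : 0 < ν.real s := ENNReal.toReal_pos hs_pos.ne' hs_fin
  have hle : ν.real s * exp (t * c) ≤ ∫ x, exp (t * f x) ∂ν :=
    calc ν.real s * exp (t * c) = ∫ _ in s, exp (t * c) ∂ν := by
          rw [setIntegral_const, smul_eq_mul]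
      _ ≤ ∫ x in s, exp (t * f x) ∂ν :=
          setIntegral_mono_on (integrableOn_const hs_fin) hint_t.integrableOn hs
            fun x hx => exp_le_exp.2 (mul_le_mul_of_nonneg_left (hcf x hx) ht.le)
      _ ≤ ∫ x, exp (t * f x) ∂ν :=
          setIntegral_le_integral hint_t (ae_of_all _ fun x => (exp_pos _).le)
  have hlog : log (ν.real s) + t * c ≤ log (∫ x, exp (t * f x) ∂ν) := by
    calc log (ν.real s) + t * c = log (ν.real s * exp (t * c)) := by
          rw [log_mul hs_real.ne' (exp_pos _).ne', log_exp]
      _ ≤ log (∫ x, exp (t * f x) ∂ν) := log_le_log (by positivity) hle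
  rw [le_div_iff₀ ht]
  calc (c + log (ν.real s) / t) * t = log (ν.real s) + t * c := by field_simp; ring
    _ ≤ _ := hlog

variable [TopologicalSpace α] [ν.IsOpenPosMeasure] [IsLocallyFiniteMeasure ν]

lemma exists_isOpen_measure_pos_lt_top_lt {x₀ : α} {c : ℝ} (hcont : ContinuousAt f x₀)
    (hc : c < f x₀) :
    ∃ s : Set α, IsOpen s ∧ 0 < ν s ∧ ν s < ⊤ ∧ ∀ x ∈ s, c < f x := by
  obtain ⟨U, hx₀U, hUo, hUfin⟩ := ν.exists_isOpen_measure_lt_top x₀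
  obtain ⟨V, hVf, hVo, hx₀V⟩ := mem_nhds_iff.1 (hcont.eventually (lt_mem_nhds hc))
  exact ⟨U ∩ V, hUo.inter hVo, (hUo.inter hVo).measure_pos ν ⟨x₀, hx₀U, hx₀V⟩,
    (measure_mono Set.inter_subset_left).trans_lt hUfin, fun x hx => hVf hx.2⟩

theorem tendsto_log_integral_exp_mul_div [OpensMeasurableSpace α] {x₀ : α}
    (hf : ∀ x, f x ≤ f x₀) (hcont : ContinuousAt f x₀) (hint : Integrable (fun x => exp (f x)) ν) :
    Tendsto (fun t : ℝ => log (∫ x, exp (t * f x) ∂ν) / t) atTop (nhds (f x₀)) := by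
  have : Nonempty α := ⟨x₀⟩
  refine tendsto_order.2 ⟨fun a ha => ?_, fun b hb => ?_⟩
  · obtain ⟨c, hac, hc⟩ := exists_between ha
    obtain ⟨s, hso, hs_pos, hs_fin, hcf⟩ :=
      exists_isOpen_measure_pos_lt_top_lt (ν := ν) hcont hc
    filter_upwards [(tendsto_const_add_const_div_atTop c (log (ν.real s))).eventually
      (lt_mem_nhds hac), eventually_ge_atTop 1] with t hat ht
    exact hat.trans_le <| add_log_measureReal_div_le_log_integral_exp_mul_div hso.measurableSet
      hs_pos hs_fin.ne (fun x hx => (hcf x hx).le) (integrable_exp_mul_of_le hf hint ht)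
      (by linarith)
  · filter_upwards [(tendsto_const_add_const_div_atTop (f x₀)
      (log (∫ x, exp (f x) ∂ν) - f x₀)).eventually (gt_mem_nhds hb), eventually_ge_atTop 1]
      with t hbt ht
    exact (log_integral_exp_mul_div_le hf hint ht).trans_lt hbt

end LaplacePrinciple

theorem stmt_2 (f : ℝ → ℝ) (hc : Continuous f)
    (hint : Integrable (fun x => Real.exp (f x)) volume)
    (μ : ℝ) (hmax : ∀ x : ℝ, f x ≤ f μ) :
    (∀ N : ℕ, 1 ≤ N → Integrable (fun x => Real.exp (N * f x)) volume) ∧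
    Tendsto (fun N : ℕ => (1 / (N : ℝ)) * Real.log (∫ x, Real.exp (N * f x)))
      atTop (nhds (f μ)) := by
  refine ⟨fun N hN => integrable_exp_mul_of_le hmax hint (by exact_mod_cast hN), ?_⟩
  refine ((tendsto_log_integral_exp_mul_div hmax hc.continuousAt hint).comp
    tendsto_natCast_atTop_atTop).congr fun N => ?_
  simp only [Function.comp_apply, one_div_mul_eq_div]
end

section
/- For the Curie-Weiss model with f(x) = -(J/2)x² + log cosh(Jx + h): (i) if h ≠ 0 and J > 0, then f has a unique global maximum point; (ii) if h = 0 and 0 < J ≤ 1, the unique global maximum point of f is x = 0; (iii) if h = 0 and J > 1, then f has exactly two global maximum points ±μ₀ with μ₀ > 0 satisfying μ₀ = tanh(J μ₀). -/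
/-!
Global maximisers of `f` exist because `f → -∞`, and each is a critical point
`μ = tanh (J μ + h)`. As `tanh` is strictly concave on `[0, ∞)`, for `h ≥ 0` the equation
`x = tanh (J x + h)` has at most one positive solution: between two of them the graph of
`x ↦ tanh (J x + h)` would lie strictly above the chord from `(0, tanh h)`.

For `h > 0` we have `f (-x) < f x` whenever `x > 0`, so maximisers are positive, hence unique;
`h < 0` reduces to this by `x ↦ -x`. For `h = 0` the function is even. If `J ≤ 1`, the bound
`log cosh t ≤ t² / 2` gives `f ≤ f 0` and `tanh t < t` rules out nonzero fixed points. If `J > 1`,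
the derivative `J (tanh (J x) - x)` is positive just to the right of `0`, so `0` is not a maximiser
and all maximisers have the same absolute value, the positive fixed point.
-/

open Real Set Filter

namespace Real

theorem hasDerivAt_tanh (x : ℝ) : HasDerivAt tanh (1 - tanh x ^ 2) x := by
  have key := (hasDerivAt_sinh x).div (hasDerivAt_cosh x) (cosh_pos x).ne'
  rw [show sinh / cosh = tanh from funext fun y => (tanh_eq_sinh_div_cosh y).symm] at key
  refine key.congr_deriv ?_
  rw [tanh_eq_sinh_div_cosh]
  field_simp

theorem continuous_tanh : Continuous tanh :=
  continuous_iff_continuousAt.2 fun x => (hasDerivAt_tanh x).continuousAt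

theorem tanh_strictMono : StrictMono tanh :=
  strictMono_of_deriv_pos fun x => by
    rw [(hasDerivAt_tanh x).deriv]; linarith [tanh_sq_lt_one x]

theorem tanh_pos {x : ℝ} (hx : 0 < x) : 0 < tanh x := by
  simpa using tanh_strictMono hx

theorem tanh_nonneg {x : ℝ} (hx : 0 ≤ x) : 0 ≤ tanh x := by
  simpa using tanh_strictMono.monotone hx

theorem tanh_lt_self {x : ℝ} (hx : 0 < x) : tanh x < x := by
  have hanti : StrictAntiOn (fun y => tanh y - y) (Ici 0) := by
    refine strictAntiOn_of_deriv_neg (convex_Ici 0)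
      (continuous_tanh.sub continuous_id).continuousOn fun y hy => ?_
    rw [interior_Ici] at hy
    rw [HasDerivAt.deriv (f := fun y => tanh y - y) ((hasDerivAt_tanh y).sub (hasDerivAt_id y))]
    nlinarith [tanh_pos hy]
  simpa using hanti self_mem_Ici hx.le hx

theorem strictConcaveOn_tanh : StrictConcaveOn ℝ (Ici 0) tanh := by
  refine StrictAntiOn.strictConcaveOn_of_deriv (convex_Ici 0) continuous_tanh.continuousOn ?_
  rw [interior_Ici]
  intro x hx y hy hxy
  rw [(hasDerivAt_tanh x).deriv, (hasDerivAt_tanh y).deriv]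
  nlinarith [tanh_pos hx, tanh_strictMono hxy]

theorem log_cosh_le_abs (x : ℝ) : log (cosh x) ≤ |x| := by
  rw [log_le_iff_le_exp (cosh_pos x), cosh_eq]
  linarith [exp_le_exp.2 (le_abs_self x), exp_le_exp.2 (neg_le_abs x)]

theorem log_cosh_le_sq_div_two (x : ℝ) : log (cosh x) ≤ x ^ 2 / 2 :=
  (log_le_iff_le_exp (cosh_pos x)).2 (cosh_le_exp_half_sq x)

end Real

noncomputable def curieWeiss (J h x : ℝ) : ℝ := -(J / 2) * x ^ 2 + log (cosh (J * x + h))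

section CurieWeiss

variable {J h : ℝ}

theorem curieWeiss_neg (J h x : ℝ) : curieWeiss J h (-x) = curieWeiss J (-h) x := by
  rw [curieWeiss, curieWeiss, ← cosh_neg (J * x + -h)]
  ring_nf

theorem curieWeiss_zero_abs (J x : ℝ) : curieWeiss J 0 |x| = curieWeiss J 0 x := by
  rcases abs_choice x with hx | hx <;> rw [hx]
  rw [curieWeiss_neg, neg_zero]

theorem hasDerivAt_curieWeiss (J h x : ℝ) :
    HasDerivAt (curieWeiss J h) (J * (tanh (J * x + h) - x)) x := by
  have hlin : HasDerivAt (fun x => J * x + h) J x := by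
    simpa using ((hasDerivAt_id x).const_mul J).add_const h
  have hlog := ((hasDerivAt_cosh _).comp x hlin).log (cosh_pos _).ne'
  refine (((hasDerivAt_pow 2 x).const_mul (-(J / 2))).add hlog).congr_deriv ?_
  rw [tanh_eq_sinh_div_cosh]
  simp only [Function.comp_apply]
  ring

theorem continuous_curieWeiss (J h : ℝ) : Continuous (curieWeiss J h) :=
  continuous_iff_continuousAt.2 fun x => (hasDerivAt_curieWeiss J h x).continuousAt

theorem tendsto_curieWeiss_cocompact (hJ : 0 < J) :
    Tendsto (curieWeiss J h) (cocompact ℝ) atBot := by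
  have hbound : ∀ x, curieWeiss J h x ≤ -(J / 4) * ‖x‖ ^ 2 + (J + |h|) := by
    intro x
    have hlog := log_cosh_le_abs (J * x + h)
    have htri : |J * x + h| ≤ J * |x| + |h| := by
      simpa [abs_mul, abs_of_pos hJ] using abs_add_le (J * x) h
    rw [curieWeiss, Real.norm_eq_abs, ← sq_abs x]
    nlinarith [mul_nonneg hJ.le (sq_nonneg (|x| / 2 - 1))]
  refine tendsto_atBot_mono hbound (tendsto_atBot_add_const_right _ _ ?_)
  exact ((tendsto_pow_atTop two_ne_zero).comp tendsto_norm_cocompact_atTop).const_mul_atTop_of_neg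
    (by linarith)

theorem exists_forall_curieWeiss_le (hJ : 0 < J) :
    ∃ μ, ∀ x, curieWeiss J h x ≤ curieWeiss J h μ :=
  (continuous_curieWeiss J h).exists_forall_ge (tendsto_curieWeiss_cocompact hJ)

theorem tanh_eq_of_forall_curieWeiss_le (hJ : J ≠ 0) {μ : ℝ}
    (hμ : ∀ x, curieWeiss J h x ≤ curieWeiss J h μ) : tanh (J * μ + h) = μ := by
  have hcrit :=
    IsLocalMax.hasDerivAt_eq_zero (Eventually.of_forall hμ) (hasDerivAt_curieWeiss J h μ)
  simpa [hJ, sub_eq_zero] using hcrit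

theorem eq_of_tanh_eq_self (hJ : 0 < J) (hh : 0 ≤ h) {a b : ℝ} (ha : 0 < a) (hb : 0 < b)
    (hfa : tanh (J * a + h) = a) (hfb : tanh (J * b + h) = b) : a = b := by
  wlog hab : a < b generalizing a b
  · rcases (not_lt.1 hab).eq_or_lt with hba | hba
    · exact hba.symm
    · exact (this hb ha hfb hfa hba).symm
  have hJb : 0 ≤ J * b + h := by positivity
  have hne : h ≠ J * b + h := by nlinarith
  have ht : 0 < 1 - a / b := sub_pos.2 ((div_lt_one hb).2 hab)
  have hchord := strictConcaveOn_tanh.2 hh hJb hne ht (by positivity : 0 < a / b) (by ring)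
  have hcomb : (1 - a / b) • h + (a / b) • (J * b + h) = J * a + h := by
    simp only [smul_eq_mul]; field_simp; ring
  rw [hcomb, hfa, hfb, smul_eq_mul, smul_eq_mul] at hchord
  have hcancel : a / b * b = a := by field_simp
  nlinarith [mul_nonneg ht.le (tanh_nonneg hh)]

theorem curieWeiss_neg_lt (hJ : 0 < J) (hh : 0 < h) {x : ℝ} (hx : 0 < x) :
    curieWeiss J h (-x) < curieWeiss J h x := by
  have hpos : 0 < J * x := mul_pos hJ hx
  have hcosh : cosh (J * -x + h) < cosh (J * x + h) := by
    rw [cosh_lt_cosh, abs_of_pos (by linarith : 0 < J * x + h), abs_lt]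
    constructor <;> linarith
  rw [curieWeiss, curieWeiss, neg_sq]
  linarith [log_lt_log (cosh_pos _) hcosh]

theorem pos_of_forall_curieWeiss_le (hJ : 0 < J) (hh : 0 < h) {μ : ℝ}
    (hμ : ∀ x, curieWeiss J h x ≤ curieWeiss J h μ) : 0 < μ := by
  rcases lt_trichotomy μ 0 with hneg | rfl | hpos
  · have hlt := curieWeiss_neg_lt hJ hh (neg_pos.2 hneg)
    rw [neg_neg] at hlt
    exact absurd (hμ (-μ)) hlt.not_ge
  · have hfix := tanh_eq_of_forall_curieWeiss_le hJ.ne' hμ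
    rw [mul_zero, zero_add] at hfix
    exact absurd hfix (tanh_pos hh).ne'
  · exact hpos

theorem eq_of_forall_curieWeiss_le_of_pos (hJ : 0 < J) (hh : 0 < h) {μ ν : ℝ}
    (hμ : ∀ x, curieWeiss J h x ≤ curieWeiss J h μ)
    (hν : ∀ x, curieWeiss J h x ≤ curieWeiss J h ν) : μ = ν :=
  eq_of_tanh_eq_self hJ hh.le (pos_of_forall_curieWeiss_le hJ hh hμ)
    (pos_of_forall_curieWeiss_le hJ hh hν) (tanh_eq_of_forall_curieWeiss_le hJ.ne' hμ)
    (tanh_eq_of_forall_curieWeiss_le hJ.ne' hν)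

theorem existsUnique_forall_curieWeiss_le (hJ : 0 < J) (hh : h ≠ 0) :
    ∃! μ, ∀ x, curieWeiss J h x ≤ curieWeiss J h μ := by
  obtain ⟨μ, hμ⟩ := exists_forall_curieWeiss_le (h := h) hJ
  refine ⟨μ, hμ, fun ν hν => ?_⟩
  rcases hh.lt_or_gt with hneg | hpos
  · have reflect : ∀ {m}, (∀ x, curieWeiss J h x ≤ curieWeiss J h m) →
        ∀ x, curieWeiss J (-h) x ≤ curieWeiss J (-h) (-m) := fun hm x => by
      simpa [curieWeiss_neg] using hm (-x)
    exact neg_injective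
      (eq_of_forall_curieWeiss_le_of_pos hJ (neg_pos.2 hneg) (reflect hν) (reflect hμ))
  · exact eq_of_forall_curieWeiss_le_of_pos hJ hpos hν hμ

theorem curieWeiss_zero_le_of_le_one (hJ : 0 < J) (hJ1 : J ≤ 1) (x : ℝ) :
    curieWeiss J 0 x ≤ curieWeiss J 0 0 := by
  have hlog := log_cosh_le_sq_div_two (J * x + 0)
  simp only [curieWeiss, mul_zero, add_zero, cosh_zero, log_one] at hlog ⊢
  nlinarith [mul_nonneg (mul_nonneg hJ.le (sq_nonneg x)) (sub_nonneg.2 hJ1)]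

theorem eq_zero_of_forall_curieWeiss_le (hJ : 0 < J) (hJ1 : J ≤ 1) {μ : ℝ}
    (hμ : ∀ x, curieWeiss J 0 x ≤ curieWeiss J 0 μ) : μ = 0 := by
  by_contra hne
  have hfix := tanh_eq_of_forall_curieWeiss_le hJ.ne' (μ := |μ|) (by rwa [curieWeiss_zero_abs])
  rw [add_zero] at hfix
  have hlt := tanh_lt_self (mul_pos hJ (abs_pos.2 hne))
  nlinarith [abs_pos.2 hne]

theorem exists_curieWeiss_zero_gt (hJ1 : 1 < J) :
    ∃ x, curieWeiss J 0 0 < curieWeiss J 0 x := by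
  have hJ : 0 < J := by linarith
  set ψ : ℝ → ℝ := fun x => tanh (J * x) - x
  have hψ : HasDerivAt ψ (J - 1) 0 :=
    (((hasDerivAt_tanh (J * 0)).comp 0 ((hasDerivAt_id 0).const_mul J)).sub
      (hasDerivAt_id 0)).congr_deriv (by simp)
  have hsign := eventually_nhdsWithin_sign_eq_of_deriv_pos (f := ψ) (x₀ := 0)
    (by rw [hψ.deriv]; linarith) (by simp [ψ])
  obtain ⟨l, u, ⟨hl, hu⟩, hsub⟩ := mem_nhds_iff_exists_Ioo_subset.1 hsign
  have hpos : ∀ x ∈ Ioo 0 u, 0 < ψ x := fun x hx => by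
    have hx' : SignType.sign (ψ x) = SignType.sign (x - 0) := hsub ⟨hl.trans hx.1, hx.2⟩
    rwa [sub_zero, sign_pos hx.1, sign_eq_one_iff] at hx'
  refine ⟨u / 2, strictMonoOn_of_deriv_pos (convex_Icc 0 (u / 2))
    (continuous_curieWeiss J 0).continuousOn (fun x hx => ?_) ⟨le_rfl, by linarith⟩
    ⟨by linarith, le_rfl⟩ (by linarith)⟩
  rw [interior_Icc] at hx
  rw [(hasDerivAt_curieWeiss J 0 x).deriv, add_zero]
  exact mul_pos hJ (hpos x ⟨hx.1, by linarith [hx.2]⟩)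

theorem exists_pos_setOf_forall_curieWeiss_le (hJ1 : 1 < J) :
    ∃ μ₀ : ℝ, 0 < μ₀ ∧ μ₀ = tanh (J * μ₀) ∧
      {μ : ℝ | ∀ x, curieWeiss J 0 x ≤ curieWeiss J 0 μ} = {μ₀, -μ₀} := by
  have hJ : 0 < J := by linarith
  have habs : ∀ {μ}, (∀ x, curieWeiss J 0 x ≤ curieWeiss J 0 μ) →
      ∀ x, curieWeiss J 0 x ≤ curieWeiss J 0 |μ| := fun hμ => by
    rwa [curieWeiss_zero_abs]
  have habs_pos : ∀ {μ}, (∀ x, curieWeiss J 0 x ≤ curieWeiss J 0 μ) → 0 < |μ| := fun hμ => by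
    obtain ⟨x, hx⟩ := exists_curieWeiss_zero_gt hJ1
    refine abs_pos.2 fun h0 => ?_
    rw [h0] at hμ
    exact (hμ x).not_gt hx
  have hfix : ∀ {μ}, (∀ x, curieWeiss J 0 x ≤ curieWeiss J 0 μ) → tanh (J * |μ| + 0) = |μ| :=
    fun hμ => tanh_eq_of_forall_curieWeiss_le hJ.ne' (habs hμ)
  obtain ⟨m, hm⟩ := exists_forall_curieWeiss_le (h := 0) hJ
  refine ⟨|m|, habs_pos hm, by simpa using (hfix hm).symm, Set.ext fun ν => ⟨fun hν => ?_, ?_⟩⟩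
  · exact abs_eq (abs_nonneg m) |>.1
      (eq_of_tanh_eq_self hJ le_rfl (habs_pos hν) (habs_pos hm) (hfix hν) (hfix hm))
  · rintro (rfl | rfl)
    · exact habs hm
    · rw [mem_ofPred_eq, ← curieWeiss_zero_abs, abs_neg, abs_abs]
      exact habs hm

end CurieWeiss

theorem stmt_7 (J h : ℝ) (hJ : 0 < J) (f : ℝ → ℝ)
    (hf : ∀ x, f x = -(J / 2) * x ^ 2 + Real.log (Real.cosh (J * x + h))) :
    (h ≠ 0 → ∃! μ : ℝ, ∀ x, f x ≤ f μ) ∧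
    (h = 0 → J ≤ 1 → (∀ x, f x ≤ f 0) ∧ ∀ μ : ℝ, (∀ x, f x ≤ f μ) → μ = 0) ∧
    (h = 0 → 1 < J → ∃ μ₀ : ℝ, 0 < μ₀ ∧ μ₀ = Real.tanh (J * μ₀) ∧
      {μ : ℝ | ∀ x, f x ≤ f μ} = {μ₀, -μ₀}) := by
  obtain rfl : f = curieWeiss J h := funext hf
  refine ⟨existsUnique_forall_curieWeiss_le hJ, ?_, ?_⟩
  · rintro rfl hJ1
    exact ⟨curieWeiss_zero_le_of_le_one hJ hJ1, fun μ => eq_zero_of_forall_curieWeiss_le hJ hJ1⟩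
  · rintro rfl hJ1
    exact exists_pos_setOf_forall_curieWeiss_le hJ1
end
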